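/- Let θ > 0 satisfy ψ(θ) < ∞, θψ'(θ) > ψ(θ), and the L log L condition. If C(θ) = 1 then P(Z_1(ℝ) ≤ 1) = 1, i.e., the reproduction law puts no mass on families of size ≥ 2. Equivalently, C(θ) < 1 if and only if P(Z_1(ℝ) ≥ 2) > 0. -/

import Mathlib

open MeasureTheory ProbabilityTheory Filter Set
open scoped ENNReal NNReal Topology Classical

noncomputable section

open MeasureTheory ProbabilityTheory Filter Set
open scoped ENNReal NNReal Topology Classical

noncomputable section

abbrev Label := List ℕ

/-- exponential `EReal → ℝ≥0∞` with `exp ⊥ = 0`, `exp ⊤ = ∞`. -/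
def eexp (x : EReal) : ℝ≥0∞ :=
  if x = ⊥ then 0 else if x = ⊤ then ⊤ else ENNReal.ofReal (Real.exp x.toReal)

/-- logarithm `ℝ≥0∞ → EReal`. -/
def elog (y : ℝ≥0∞) : EReal :=
  if y = 0 then ⊥ else if y = ⊤ then ⊤ else ((Real.log y.toReal : ℝ) : EReal)

/-- number of atoms of an extended-real position lying in a real set. -/
def cnt (A : Set ℝ) (x : EReal) : ℝ≥0∞ :=
  Set.indicator (Real.toEReal '' A) (fun _ => (1 : ℝ≥0∞)) x

/-- evaluation of a nonnegative test function at an extended position (dead particles ignored). -/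
def evalTest (φ : ℝ → ℝ) (x : EReal) : ℝ≥0∞ :=
  if x = ⊥ ∨ x = ⊤ then 0 else ENNReal.ofReal (φ x.toReal)

/-- `e^{-x}` for `x : ℝ≥0∞`. -/
def nexp (x : ℝ≥0∞) : ℝ≥0∞ :=
  if x = ⊤ then 0 else ENNReal.ofReal (Real.exp (-x.toReal))

/-- `log₊` on `ℝ≥0∞`. -/
def plog (x : ℝ≥0∞) : ℝ≥0∞ :=
  if x = ⊤ then ⊤ else ENNReal.ofReal (Real.log (max x.toReal 1))

variable {Ω : Type} [MeasurableSpace Ω]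

/-- A branching random walk: i.i.d. displacement point processes indexed by Ulam–Harris labels
(the label of a particle is the list of child indices along its ancestral line, most recent
first); `disp u ω i` is the displacement of the `i`-th child of particle `u`, equal to `⊥`
if this child does not exist. -/
structure BRW (Ω : Type) [MeasurableSpace Ω] (P : Measure Ω) where
  disp : Label → Ω → ℕ → EReal
  meas : ∀ u, Measurable (disp u)
  indep : iIndepFun (m := fun _ => inferInstance) disp P
  ident : ∀ u v, IdentDistrib (disp u) (disp v) P P

namespace BRW

variable {P : Measure Ω}

/-- position `V(u)` of the particle with label `u` (`⊥` if it is dead). -/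
def V (b : BRW Ω P) : Label → Ω → EReal
  | [], _ => 0
  | i :: u, ω => b.V u ω + b.disp u ω i

/-- maximal displacement at generation `n`. -/
def M (b : BRW Ω P) (n : ℕ) (ω : Ω) : EReal :=
  ⨆ u : {u : Label // u.length = n}, b.V u ω

/-- `E (Σ_{|u|=1} e^{θ V(u)})`. -/
def Lap (b : BRW Ω P) (θ : ℝ) : ℝ≥0∞ :=
  ∫⁻ ω, ∑' i : ℕ, (if b.V [i] ω = ⊥ then 0 else eexp ((θ : EReal) * b.V [i] ω)) ∂P

/-- the log-Laplace transform `ψ(θ)`. -/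
def ψe (b : BRW Ω P) (θ : ℝ) : EReal := elog (b.Lap θ)

/-- the Legendre transform `ψ*(x) = sup_{θ ≥ 0} (θ x − ψ(θ))`. -/
def ψStar (b : BRW Ω P) (x : ℝ) : EReal :=
  ⨆ θ : {θ : ℝ // 0 ≤ θ}, ((θ.1 * x : ℝ) : EReal) - b.ψe θ.1

/-- `x* = inf_{θ>0} ψ(θ)/θ`. -/
def xstar (b : BRW Ω P) : EReal :=
  ⨅ θ : {θ : ℝ // 0 < θ}, b.ψe θ.1 * ((θ.1⁻¹ : ℝ) : EReal)

/-- number of particles alive at generation `n`, i.e. `Z_n(ℝ)`. -/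
def ZR (b : BRW Ω P) (n : ℕ) (ω : Ω) : ℝ≥0∞ :=
  ∑' u : {u : Label // u.length = n}, if b.V u ω = ⊥ then 0 else 1

/-- number of particles at generation `n` located in `A`, i.e. `Z_n(A)`. -/
def Zset (b : BRW Ω P) (n : ℕ) (A : Set ℝ) (ω : Ω) : ℝ≥0∞ :=
  ∑' u : {u : Label // u.length = n}, cnt A (b.V u ω)

/-- mass of the extremal process `ℰ_n = Σ_{|u|=n} δ_{V(u)−M_n}` on a set `A`. -/
def Emeas (b : BRW Ω P) (n : ℕ) (ω : Ω) (A : Set ℝ) : ℝ≥0∞ :=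
  ∑' u : {u : Label // u.length = n}, cnt A (b.V u ω - b.M n ω)

/-- `ℰ_n(φ) = Σ_{|u|=n} φ(V(u)−M_n)`. -/
def Etest (b : BRW Ω P) (n : ℕ) (φ : ℝ → ℝ) (ω : Ω) : ℝ≥0∞ :=
  ∑' u : {u : Label // u.length = n}, evalTest φ (b.V u ω - b.M n ω)

/-- `W_1^θ = Σ_{|u|=1} e^{θ V(u)}`. -/
def W1 (b : BRW Ω P) (θ : ℝ) (ω : Ω) : ℝ≥0∞ :=
  ∑' i : ℕ, (if b.V [i] ω = ⊥ then 0 else eexp ((θ : EReal) * b.V [i] ω))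

/-- the `L log L` integrability condition (as3). -/
def LlogL (b : BRW Ω P) (θ : ℝ) : Prop :=
  ∫⁻ ω, b.W1 θ ω * plog (b.W1 θ ω) ∂P < ⊤

/-- the branching random walk is non-lattice (as4). -/
def NonLattice (b : BRW Ω P) : Prop :=
  ∀ c d : ℝ,
    P {ω | ∀ i : ℕ, b.V [i] ω ≠ ⊥ → ∃ k : ℤ, b.V [i] ω = ((c + d * k : ℝ) : EReal)} < 1

/-- `σ² = E (Σ_{|u|=1} (V(u) − ψ'(θ))² e^{θV(u)})` (as2). -/
def VarCond (b : BRW Ω P) (θ ψ' σ2 : ℝ) : Prop :=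
  (∫⁻ ω, ∑' i : ℕ, (if b.V [i] ω = ⊥ then 0 else
      ENNReal.ofReal (((b.V [i] ω).toReal - ψ') ^ 2) * eexp ((θ : EReal) * b.V [i] ω)) ∂P)
    = ENNReal.ofReal σ2

end BRW


/-- index type for the independent ingredients of the spine construction. -/
def SpIdx : Type := ℕ ⊕ (ℕ × ℕ)

def SpType : SpIdx → Type :=
  Sum.elim (fun _ => (ℕ → EReal) × ℕ) (fun _ => Label → EReal)

instance : ∀ i : SpIdx, MeasurableSpace (SpType i) := fun i => by
  cases i with
  | inl k => exact (inferInstance : MeasurableSpace ((ℕ → EReal) × ℕ))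
  | inr p => exact (inferInstance : MeasurableSpace (Label → EReal))

/-- The time-reversed spine construction for a branching random walk:
`B k · i = b_{k+1}(i)` is the displacement point process of the children of the spine at
time `k+1`, `W k = w^{(k+1)}` the spine index, `Vc i k = V^{(i,k+1)}` independent copies of
the branching random walk; `(B k, W k)` has the size-biased law with spine choice, all the
ingredients are independent, and the spine step has mean `ψ' = ψ'(θ)` with
`ψ = ψ(θ) < ∞`. -/
structure SpineSetup (Ω : Type) [MeasurableSpace Ω] (P : Measure Ω) (θ ψ ψ' : ℝ)
    extends BRW Ω P where
  B : ℕ → Ω → ℕ → EReal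
  W : ℕ → Ω → ℕ
  Vc : ℕ → ℕ → Label → Ω → EReal
  lapEq : toBRW.Lap θ = ENNReal.ofReal (Real.exp ψ)
  sbLaw : ∀ k : ℕ, ∀ f : (ℕ → EReal) × ℕ → ℝ≥0∞, Measurable f →
    ∫⁻ ω, f (B k ω, W k ω) ∂P
      = ∫⁻ ω, ∑' i : ℕ, (if toBRW.V [i] ω = ⊥ then 0 else
          eexp ((θ : EReal) * toBRW.V [i] ω - (ψ : EReal)) *
            f (fun j => toBRW.V [j] ω, i)) ∂P
  copyLaw : ∀ i k : ℕ, ∀ f : (Label → EReal) → ℝ≥0∞, Measurable f →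
    ∫⁻ ω, f (fun u => Vc i k u ω) ∂P = ∫⁻ ω, f (fun u => toBRW.V u ω) ∂P
  indepAll : iIndepFun (m := fun (i : SpIdx) => inferInstance)
    (fun i => Sum.rec (motive := fun i => Ω → SpType i)
      (fun k ω => (B k ω, W k ω)) (fun p ω u => Vc p.1 p.2 u ω) i) P
  stepInt : Integrable (fun ω => (B 0 ω (W 0 ω)).toReal) P
  stepMean : ∫ ω, (B 0 ω (W 0 ω)).toReal ∂P = ψ'

namespace SpineSetup

variable {P : Measure Ω} {θ ψ ψ' : ℝ}

/-- the spine random walk `S_n = Σ_{k=1}^n b_k(w^{(k)})`. -/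
def S (s : SpineSetup Ω P θ ψ ψ') (n : ℕ) (ω : Ω) : ℝ :=
  ∑ k ∈ Finset.range n, (s.B k ω (s.W k ω)).toReal

/-- the atom `b_{k+1}(i) + V^{(i,k+1)}(u) − S_{k+1}` of the decoration measure. -/
def atom (s : SpineSetup Ω P θ ψ ψ') (k i : ℕ) (u : Label) (ω : Ω) : EReal :=
  s.B k ω i + s.Vc i k u ω - ((s.S (k + 1) ω : ℝ) : EReal)

/-- mass of `D_n^θ` on a set `A ⊆ ℝ`. -/
def Dn (s : SpineSetup Ω P θ ψ ψ') (n : ℕ) (ω : Ω) (A : Set ℝ) : ℝ≥0∞ :=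
  cnt A 0 + ∑ k ∈ Finset.range n, ∑' i : ℕ, ∑' u : {u : Label // u.length = k},
    if i = s.W k ω then 0 else cnt A (s.atom k i u ω)

/-- mass of `D_∞^θ` on a set `A ⊆ ℝ`. -/
def Dinf (s : SpineSetup Ω P θ ψ ψ') (ω : Ω) (A : Set ℝ) : ℝ≥0∞ :=
  cnt A 0 + ∑' k : ℕ, ∑' i : ℕ, ∑' u : {u : Label // u.length = k},
    if i = s.W k ω then 0 else cnt A (s.atom k i u ω)

/-- `D_n^θ(φ)` for a nonnegative test function `φ`. -/
def Dtest (s : SpineSetup Ω P θ ψ ψ') (n : ℕ) (φ : ℝ → ℝ) (ω : Ω) : ℝ≥0∞ :=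
  ENNReal.ofReal (φ 0) + ∑ k ∈ Finset.range n, ∑' i : ℕ, ∑' u : {u : Label // u.length = k},
    if i = s.W k ω then 0 else evalTest φ (s.atom k i u ω)

/-- `D_∞^θ(φ)` for a nonnegative test function `φ`. -/
def DtestInf (s : SpineSetup Ω P θ ψ ψ') (φ : ℝ → ℝ) (ω : Ω) : ℝ≥0∞ :=
  ENNReal.ofReal (φ 0) + ∑' k : ℕ, ∑' i : ℕ, ∑' u : {u : Label // u.length = k},
    if i = s.W k ω then 0 else evalTest φ (s.atom k i u ω)

/-- `C(θ) = E ( (1/D_∞^θ({0})) 1_{D_∞^θ((0,∞)) = 0} )`. -/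
def Cmass (s : SpineSetup Ω P θ ψ ψ') : ℝ≥0∞ :=
  ∫⁻ ω, (if s.Dinf ω (Set.Ioi 0) = 0 then (s.Dinf ω {0})⁻¹ else 0) ∂P

/-- the event `A_{n+1,ε}` of Lemma 2.3. -/
def Aev (s : SpineSetup Ω P θ ψ ψ') (n : ℕ) (ε : ℝ) : Set Ω :=
  {ω | ∀ ℓ, n ≤ ℓ →
    (⨆ k : ℕ, (s.B ℓ ω k + ⨆ u : {u : Label // u.length = ℓ}, s.Vc k ℓ u ω))
      - ((s.S (ℓ + 1) ω : ℝ) : EReal) < ((-ε * (ℓ + 1) : ℝ) : EReal)}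

end SpineSetup

/-!
`C(θ) ≤ 1` because `D_∞^θ({0}) ≥ 1` (the spine's own atom), with equality iff almost surely
`D_∞^θ` has no atom in `[0, ∞)` other than the spine's. The siblings of the spine at the first
step contribute the atoms `b_1(i) − b_1(w^{(1)})`, so `C(θ) = 1` forces the spine to lie strictly
above all its finite siblings. Under the size-biased law every living child of the root is
chosen as the spine with positive weight, so every living child would lie strictly above every
other one (none sits at `+∞`, as `ψ(θ) < ∞`): there is at most one. Conversely, if the root
has at most one child, size-biasing shows that no spine vertex has a sibling, so
`D_∞^θ = δ_0` and `C(θ) = 1`.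
-/

lemma eexp_eq_exp : eexp = EReal.exp := by
  ext1 x
  induction x using EReal.rec <;> simp [eexp]

lemma EReal.coe_mul_sub_coe_ne_bot {θ ψ : ℝ} (hθ : 0 ≤ θ) {x : EReal} (hx : x ≠ ⊥) :
    (θ : EReal) * x - ψ ≠ ⊥ := by
  have hmul : (θ : EReal) * x ≠ ⊥ := by
    rw [EReal.mul_ne_bot]
    exact ⟨.inl (EReal.coe_ne_bot θ), .inr hx, .inl (EReal.coe_ne_top θ),
      .inl (by exact_mod_cast hθ)⟩
  generalize (θ : EReal) * x = y at hmul ⊢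
  induction y using EReal.rec with
  | bot => exact absurd rfl hmul
  | coe y => exact_mod_cast EReal.coe_ne_bot (y - ψ)
  | top => simp

lemma ae_eq_one_of_lintegral_eq_measure_univ {α : Type*} [MeasurableSpace α] {μ : Measure α}
    [IsFiniteMeasure μ] {g : α → ℝ≥0∞} (hg : ∀ x, g x ≤ 1) (h : ∫⁻ x, g x ∂μ = μ univ) :
    ∀ᵐ x ∂μ, g x = 1 :=
  ae_eq_of_ae_le_of_lintegral_le (ae_of_all _ hg) (by rw [h]; exact measure_ne_top μ univ)
    aemeasurable_const (by rw [h, lintegral_one])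

lemma ae_mem_of_lintegral_indicator_eq_measure_univ {α β : Type*} [MeasurableSpace α]
    {μ : Measure α} [IsFiniteMeasure μ] {S : Set β} {f : α → β}
    (h : ∫⁻ x, S.indicator 1 (f x) ∂μ = μ univ) : ∀ᵐ x ∂μ, f x ∈ S :=
  (ae_eq_one_of_lintegral_eq_measure_univ (g := fun x => S.indicator 1 (f x))
    (fun _ => Set.indicator_le (fun _ _ => le_rfl) _) h).mono
    fun _ hx => (Set.indicator_eq_one_iff_mem ℝ≥0∞).1 hx

lemma cnt_eq_zero_iff {A : Set ℝ} {x : EReal} : cnt A x = 0 ↔ ∀ r ∈ A, x ≠ r := by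
  simp only [cnt, Set.indicator_apply_eq_zero, Set.mem_image, one_ne_zero, imp_false]
  aesop

lemma cnt_le_one (A : Set ℝ) (x : EReal) : cnt A x ≤ 1 :=
  Set.indicator_le (fun _ _ => le_rfl) x

lemma cnt_singleton_zero_zero : cnt {0} 0 = 1 :=
  Set.indicator_of_mem (show (0 : EReal) ∈ Real.toEReal '' {0} from ⟨0, rfl, rfl⟩) _

lemma cnt_Ioi_zero_zero : cnt (Ioi 0) 0 = 0 :=
  cnt_eq_zero_iff.2 fun r hr h => hr.ne (by exact_mod_cast h)

def labelOfLengthOneEquiv : ℕ ≃ {u : Label // u.length = 1} where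
  toFun i := ⟨[i], rfl⟩
  invFun u := u.1.head (List.ne_nil_of_length_pos (by simp [u.2]))
  left_inv _ := rfl
  right_inv := fun ⟨u, hu⟩ => by
    obtain ⟨a, rfl⟩ := List.length_eq_one_iff.1 hu
    rfl

namespace BRW

variable {P : Measure Ω} (b : BRW Ω P)

lemma ZR_one_eq_encard (ω : Ω) : b.ZR 1 ω = {i | b.V [i] ω ≠ ⊥}.encard := by
  rw [ZR, ← labelOfLengthOneEquiv.tsum_eq, ← ENNReal.tsum_set_one,
    tsum_subtype _ fun _ => (1 : ℝ≥0∞)]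
  congr 1
  ext i
  change (if b.V [i] ω = ⊥ then (0 : ℝ≥0∞) else 1) = _
  by_cases h : b.V [i] ω = ⊥ <;> simp [h]

lemma ZR_one_le_one_iff (ω : Ω) : b.ZR 1 ω ≤ 1 ↔ {i | b.V [i] ω ≠ ⊥}.Subsingleton := by
  rw [ZR_one_eq_encard, ← ENat.toENNReal_one, ENat.toENNReal_le,
    Set.encard_le_one_iff_subsingleton]

lemma two_le_ZR_one_iff (ω : Ω) : 2 ≤ b.ZR 1 ω ↔ {i | b.V [i] ω ≠ ⊥}.Nontrivial := by
  rw [ZR_one_eq_encard, ← Set.one_lt_encard_iff_nontrivial,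
    ← Order.add_one_le_iff_of_not_isMax (by simp), one_add_one_eq_two, ← ENat.toENNReal_le]
  rfl

lemma measurable_V_singleton (i : ℕ) : Measurable (b.V [i]) := by
  have h : b.V [i] = fun ω => b.disp [] ω i := by funext ω; simp [V]
  exact h ▸ (measurable_pi_apply i).comp (b.meas [])

lemma ae_V_singleton_ne_top {θ : ℝ} (hθ : 0 < θ) (hLap : b.Lap θ ≠ ⊤) :
    ∀ᵐ ω ∂P, ∀ i, b.V [i] ω ≠ ⊤ := by
  have hmeas : Measurable (b.W1 θ) := by
    refine Measurable.tsum fun i => Measurable.ite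
      (b.measurable_V_singleton i (measurableSet_singleton _)) measurable_const ?_
    have := b.measurable_V_singleton
    rw [eexp_eq_exp]
    fun_prop
  filter_upwards [ae_lt_top hmeas hLap] with ω hω i hi
  refine hω.ne (top_le_iff.1 ?_)
  calc ⊤ = (if b.V [i] ω = ⊥ then 0 else eexp (θ * b.V [i] ω)) := by
        simp [hi, eexp_eq_exp, EReal.mul_top_of_pos (EReal.coe_pos.2 hθ)]
    _ ≤ b.W1 θ ω := ENNReal.le_tsum i

end BRW

def soleChild : Set ((ℕ → EReal) × ℕ) := {p | ∀ j ≠ p.2, p.1 j = ⊥}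

def strictlyHighest : Set ((ℕ → EReal) × ℕ) :=
  {p | ∀ j ≠ p.2, p.1 j ≠ ⊤ → p.1 j < ((p.1 p.2).toReal : EReal)}

lemma measurableSet_soleChild : MeasurableSet soleChild := by
  unfold soleChild
  measurability

lemma measurableSet_strictlyHighest : MeasurableSet strictlyHighest :=
  measurableSet_setOfPred.2 (measurable_from_prod_countable_left fun _ => by measurability)

namespace SpineSetup

variable {P : Measure Ω} {θ ψ ψ' : ℝ} (s : SpineSetup Ω P θ ψ ψ')

lemma ae_spine_mem_of_ae_children_mem [IsFiniteMeasure P] {S : Set ((ℕ → EReal) × ℕ)}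
    (hS : MeasurableSet S) (h : ∀ᵐ ω ∂P, ∀ i, s.V [i] ω ≠ ⊥ → (fun j => s.V [j] ω, i) ∈ S)
    (k : ℕ) : ∀ᵐ ω ∂P, (s.B k ω, s.W k ω) ∈ S := by
  refine ae_mem_of_lintegral_indicator_eq_measure_univ ?_
  have htotal := s.sbLaw k (fun _ => 1) measurable_const
  beta_reduce at htotal
  rw [s.sbLaw k _ (measurable_one.indicator hS), ← lintegral_one, htotal]
  refine lintegral_congr_ae ?_
  filter_upwards [h] with ω hω
  refine tsum_congr fun i => ?_
  split_ifs with hi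
  · rfl
  · simp [hω i hi]

lemma ae_children_mem_of_ae_spine_mem (hθ : 0 ≤ θ) {S : Set ((ℕ → EReal) × ℕ)}
    (hS : MeasurableSet S) (k : ℕ) (h : ∀ᵐ ω ∂P, (s.B k ω, s.W k ω) ∈ S) :
    ∀ᵐ ω ∂P, ∀ i, s.V [i] ω ≠ ⊥ → (fun j => s.V [j] ω, i) ∈ S := by
  have hzero : ∫⁻ ω, Sᶜ.indicator 1 (s.B k ω, s.W k ω) ∂P = 0 := by
    rw [lintegral_congr_ae (h.mono fun ω hω => Set.indicator_of_notMem (not_not_intro hω) _),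
      lintegral_zero]
  rw [s.sbLaw k _ (measurable_one.indicator hS.compl), lintegral_eq_zero_iff (by
    rw [eexp_eq_exp]
    refine Measurable.tsum fun i => Measurable.ite ?_ measurable_const ?_
    · exact s.measurable_V_singleton i (measurableSet_singleton _)
    · have := s.measurable_V_singleton
      have := hS.compl
      fun_prop)] at hzero
  filter_upwards [hzero] with ω hω i hi
  have hterm := ENNReal.tsum_eq_zero.1 hω i
  rw [if_neg hi, mul_eq_zero, eexp_eq_exp, EReal.exp_eq_zero_iff,
    or_iff_right (EReal.coe_mul_sub_coe_ne_bot hθ hi)] at hterm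
  by_contra hnot
  simp [hnot] at hterm

lemma ae_Vc_nil_eq_zero [IsFiniteMeasure P] : ∀ᵐ ω ∂P, ∀ i k, s.Vc i k [] ω = 0 := by
  simp only [ae_all_iff]
  intro i k
  refine ae_mem_of_lintegral_indicator_eq_measure_univ
    (S := {g : Label → EReal | g [] = 0}) (f := fun ω u => s.Vc i k u ω) ?_
  have hS : MeasurableSet {g : Label → EReal | g [] = 0} :=
    measurable_pi_apply [] (measurableSet_singleton 0)
  have hroot : ∀ ω, (fun u => s.V u ω) ∈ {g : Label → EReal | g [] = 0} := fun _ => rfl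
  rw [s.copyLaw i k _ (measurable_one.indicator hS)]
  simp only [Set.indicator_of_mem (hroot _), Pi.one_apply, lintegral_one]

def cDensity (ω : Ω) : ℝ≥0∞ :=
  if s.Dinf ω (Set.Ioi 0) = 0 then (s.Dinf ω {0})⁻¹ else 0

lemma Cmass_eq_lintegral_cDensity : s.Cmass = ∫⁻ ω, s.cDensity ω ∂P := rfl

lemma cDensity_le_one (ω : Ω) : s.cDensity ω ≤ 1 := by
  unfold cDensity
  split_ifs
  · rw [ENNReal.inv_le_one, Dinf, cnt_singleton_zero_zero]
    exact le_self_add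
  · exact zero_le_one

lemma Dinf_eq_cnt_zero_iff (ω : Ω) (A : Set ℝ) :
    s.Dinf ω A = cnt A 0 ↔ ∀ k i (u : {u : Label // u.length = k}), i ≠ s.W k ω →
      cnt A (s.atom k i u ω) = 0 := by
  conv_lhs => rhs; rw [← add_zero (cnt A 0)]
  rw [Dinf, ENNReal.add_right_inj (ne_top_of_le_ne_top ENNReal.one_ne_top (cnt_le_one A 0))]
  simp only [ENNReal.tsum_eq_zero, ite_eq_left_iff]

lemma cDensity_eq_one_iff (ω : Ω) : s.cDensity ω = 1 ↔
    ∀ k i (u : {u : Label // u.length = k}), i ≠ s.W k ω → ∀ r : ℝ, 0 ≤ r →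
      s.atom k i u ω ≠ r := by
  have hIoi : s.Dinf ω (Ioi 0) = 0 ↔ s.Dinf ω (Ioi 0) = cnt (Ioi 0) 0 := by
    rw [cnt_Ioi_zero_zero]
  have hzero : s.Dinf ω {0} = 1 ↔ s.Dinf ω {0} = cnt {0} 0 := by
    rw [cnt_singleton_zero_zero]
  have hdensity : s.cDensity ω = 1 ↔ s.Dinf ω (Ioi 0) = 0 ∧ s.Dinf ω {0} = 1 := by
    unfold cDensity
    split_ifs with h <;> simp [h]
  rw [hdensity, hIoi, hzero, Dinf_eq_cnt_zero_iff, Dinf_eq_cnt_zero_iff]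
  simp only [cnt_eq_zero_iff, ← forall_and]
  refine forall₄_congr fun k i u _ => forall_congr' fun r => ?_
  rw [mem_Ioi, mem_singleton_iff, ← or_imp, le_iff_lt_or_eq, eq_comm (a := (0 : ℝ))]

lemma Cmass_le_one [IsProbabilityMeasure P] : s.Cmass ≤ 1 :=
  calc s.Cmass = ∫⁻ ω, s.cDensity ω ∂P := s.Cmass_eq_lintegral_cDensity
    _ ≤ ∫⁻ _, 1 ∂P := lintegral_mono s.cDensity_le_one
    _ = 1 := by simp

lemma Cmass_eq_one_iff_ae_cDensity_eq_one [IsProbabilityMeasure P] :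
    s.Cmass = 1 ↔ ∀ᵐ ω ∂P, s.cDensity ω = 1 := by
  refine ⟨fun h => ae_eq_one_of_lintegral_eq_measure_univ s.cDensity_le_one ?_, fun h => ?_⟩
  · rw [← Cmass_eq_lintegral_cDensity, h, measure_univ]
  · rw [Cmass_eq_lintegral_cDensity, lintegral_congr_ae h, lintegral_one, measure_univ]

lemma spine_mem_strictlyHighest_of_cDensity_eq_one {ω : Ω} (hω : s.cDensity ω = 1)
    (hVc : ∀ i, s.Vc i 0 [] ω = 0) : (s.B 0 ω, s.W 0 ω) ∈ strictlyHighest := by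
  intro j hj htop
  dsimp only at hj htop ⊢
  have hS1 : s.S 1 ω = (s.B 0 ω (s.W 0 ω)).toReal := by simp [S]
  have hatom := (s.cDensity_eq_one_iff ω).1 hω 0 j ⟨[], rfl⟩ hj
  simp only [atom, hVc, add_zero, hS1] at hatom
  generalize s.B 0 ω j = x at hatom htop ⊢
  induction x using EReal.rec with
  | bot => exact EReal.bot_lt_coe _
  | top => exact absurd rfl htop
  | coe x =>
    refine EReal.coe_lt_coe_iff.2 (lt_of_not_ge fun hle => hatom _ (sub_nonneg.2 hle) ?_)
    rw [EReal.coe_sub]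

lemma ae_children_subsingleton_of_Cmass_eq_one [IsProbabilityMeasure P] (hθ : 0 < θ)
    (h : s.Cmass = 1) : ∀ᵐ ω ∂P, {i | s.V [i] ω ≠ ⊥}.Subsingleton := by
  have hspine : ∀ᵐ ω ∂P, (s.B 0 ω, s.W 0 ω) ∈ strictlyHighest := by
    filter_upwards [s.Cmass_eq_one_iff_ae_cDensity_eq_one.1 h, s.ae_Vc_nil_eq_zero]
      with ω hω hVc
    exact s.spine_mem_strictlyHighest_of_cDensity_eq_one hω fun i => hVc i 0
  have hLap : s.Lap θ ≠ ⊤ := by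
    rw [s.lapEq]
    exact ENNReal.ofReal_ne_top
  filter_upwards [s.ae_children_mem_of_ae_spine_mem hθ.le measurableSet_strictlyHighest 0 hspine,
    s.ae_V_singleton_ne_top hθ hLap] with ω hhighest hfinite i hi j hj
  by_contra hij
  have hreal : ∀ i, s.V [i] ω ≠ ⊥ → ((s.V [i] ω).toReal : EReal) = s.V [i] ω :=
    fun i hi => EReal.coe_toReal (hfinite i) hi
  have hji := hhighest i hi j (Ne.symm hij) (hfinite j)
  have hij' := hhighest j hj i hij (hfinite i)
  rw [hreal i hi] at hji
  rw [hreal j hj] at hij'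
  exact lt_asymm hji hij'

lemma Cmass_eq_one_of_ae_children_subsingleton [IsProbabilityMeasure P]
    (h : ∀ᵐ ω ∂P, {i | s.V [i] ω ≠ ⊥}.Subsingleton) : s.Cmass = 1 := by
  have hchildren : ∀ᵐ ω ∂P, ∀ i, s.V [i] ω ≠ ⊥ → (fun j => s.V [j] ω, i) ∈ soleChild := by
    filter_upwards [h] with ω hω i hi j hji
    by_contra hj
    exact hji (hω hj hi)
  have hspine : ∀ᵐ ω ∂P, ∀ k, (s.B k ω, s.W k ω) ∈ soleChild :=
    ae_all_iff.2 (s.ae_spine_mem_of_ae_children_mem measurableSet_soleChild hchildren)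
  refine s.Cmass_eq_one_iff_ae_cDensity_eq_one.2 ?_
  filter_upwards [hspine] with ω hω
  refine (s.cDensity_eq_one_iff ω).2 fun k i u hi r _ => ?_
  have hdead : s.B k ω i = ⊥ := hω k i hi
  simp [atom, hdead]

lemma Cmass_eq_one_iff [IsProbabilityMeasure P] (hθ : 0 < θ) :
    s.Cmass = 1 ↔ ∀ᵐ ω ∂P, {i | s.V [i] ω ≠ ⊥}.Subsingleton :=
  ⟨s.ae_children_subsingleton_of_Cmass_eq_one hθ, s.Cmass_eq_one_of_ae_children_subsingleton⟩

end SpineSetup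

theorem constant_lt_one_iff_branching_general
    {Ω : Type} [MeasurableSpace Ω] {P : Measure Ω} [IsProbabilityMeasure P]
    {θ ψ ψ' : ℝ} (s : SpineSetup Ω P θ ψ ψ')
    (hθ : 0 < θ) :
    (s.Cmass = 1 → P {ω | s.toBRW.ZR 1 ω ≤ 1} = 1) ∧
    (s.Cmass < 1 ↔ 0 < P {ω | 2 ≤ s.toBRW.ZR 1 ω}) := by
  constructor
  · intro h
    have hae : ∀ᵐ ω ∂P, s.toBRW.ZR 1 ω ≤ 1 := by
      filter_upwards [(s.Cmass_eq_one_iff hθ).1 h] with ω hω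
      exact (s.ZR_one_le_one_iff ω).2 hω
    rw [measure_congr ((ae_eq_univ (s := {ω | s.toBRW.ZR 1 ω ≤ 1})).2 (ae_iff.1 hae)),
      measure_univ]
  · rw [lt_iff_le_and_ne, and_iff_right s.Cmass_le_one, Ne, s.Cmass_eq_one_iff hθ, ae_iff,
      pos_iff_ne_zero]
    simp only [BRW.two_le_ZR_one_iff, Set.not_subsingleton_iff]

/-- (Lemma 3.4) Under (as1) and (as3), `C(θ) = 1` implies
`P(Z_1(ℝ) ≤ 1) = 1`; equivalently `C(θ) < 1 ↔ P(Z_1(ℝ) ≥ 2) > 0`. -/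
theorem constant_lt_one_iff_branching
    {Ω : Type} [MeasurableSpace Ω] {P : Measure Ω} [IsProbabilityMeasure P]
    {θ ψ ψ' : ℝ} (s : SpineSetup Ω P θ ψ ψ')
    (hθ : 0 < θ) (hsp : ψ < θ * ψ') (hL : s.toBRW.LlogL θ) :
    (s.Cmass = 1 → P {ω | s.toBRW.ZR 1 ω ≤ 1} = 1) ∧
    (s.Cmass < 1 ↔ 0 < P {ω | 2 ≤ s.toBRW.ZR 1 ω}) :=
  constant_lt_one_iff_branching_general s hθ
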